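/- arXiv:2506.12369 — 2 statements merged into one kernel-verified Lean document; each statement's English description precedes it below -/
import Mathlib

section
/- Let 0 < μ < 1 and define p_n = C(μ, n) / 2^μ, so that ((1+x)/2)^μ = ∑_{n=0}^∞ p_n x^n for |x| < 1. Then ∑_{n=0}^∞ p_n = 1. -/
/-!
`genBinom α n` is `Ring.choose α n`, so Mathlib's binomial series gives
`∑ C(α, n) xⁿ = (1 + x) ^ α` for `|x| < 1`. For `α > 0` the coefficients are absolutely
summable: once `n ≥ α`, the recurrence `(n + 1) C(α, n + 1) = (α - n) C(α, n)` reads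
`α |C(α, n)| = n |C(α, n)| - (n + 1) |C(α, n + 1)|`, a telescoping sum of nonnegative terms.
Abel's limit theorem then lets `x → 1⁻`, giving `∑ C(α, n) = 2 ^ α`.
-/

/-- Generalized binomial coefficient C(α, n) = α(α-1)⋯(α-n+1)/n! for real α. -/
noncomputable def genBinom (α : ℝ) (n : ℕ) : ℝ :=
  (∏ i ∈ Finset.range n, (α - i)) / n.factorial

open Filter Topology Finset

theorem genBinom_eq_choose (α : ℝ) (n : ℕ) : genBinom α n = Ring.choose α n := by
  rw [Ring.choose_eq_smul, ← Polynomial.aeval_eq_smeval, ← Polynomial.eval_map_algebraMap,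
    descPochhammer_map, descPochhammer_eval_eq_prod_range, smul_eq_mul, genBinom, div_eq_inv_mul]

theorem hasSum_genBinom_mul_pow (α : ℝ) {x : ℝ} (hx : |x| < 1) :
    HasSum (fun n => genBinom α n * x ^ n) ((1 + x) ^ α) := by
  have hx' : x ∈ Metric.eball (0 : ℝ) 1 := by
    rw [← ENNReal.ofReal_one, Metric.eball_ofReal, mem_ball_zero_iff, Real.norm_eq_abs]
    exact hx
  simpa [binomialSeries, FormalMultilinearSeries.ofScalars_apply_eq, genBinom_eq_choose,
    mul_comm] using Real.one_add_rpow_hasFPowerSeriesOnBall_zero.hasSum hx'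

theorem succ_mul_genBinom_succ (α : ℝ) (n : ℕ) :
    (n + 1) * genBinom α (n + 1) = (α - n) * genBinom α n := by
  have : (n.factorial : ℝ) ≠ 0 := mod_cast n.factorial_ne_zero
  rw [genBinom, genBinom, prod_range_succ, Nat.factorial_succ]
  push_cast
  field_simp

theorem mul_abs_genBinom_eq_sub {α : ℝ} {n : ℕ} (hn : α ≤ n) :
    α * |genBinom α n| = n * |genBinom α n| - (n + 1) * |genBinom α (n + 1)| := by
  have h := congrArg abs (succ_mul_genBinom_succ α n)
  rw [abs_mul, abs_mul, abs_of_nonneg (by positivity : (0 : ℝ) ≤ n + 1),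
    abs_of_nonpos (by linarith : α - n ≤ 0)] at h
  linarith

theorem summable_genBinom {α : ℝ} (hα : 0 < α) : Summable (genBinom α) := by
  obtain ⟨N, hN⟩ := exists_nat_ge α
  set a : ℕ → ℝ := fun n => n * |genBinom α n|
  have hpartial : ∀ M, ∑ i ∈ range M, α * |genBinom α (i + N)| ≤ a N := by
    intro M
    have htel : ∀ i ∈ range M, α * |genBinom α (i + N)| = a (N + i) - a (N + (i + 1)) := by
      intro i _
      rw [add_comm i N, mul_abs_genBinom_eq_sub (hN.trans (by norm_cast; omega))]
      simp only [a, Nat.cast_add, Nat.cast_one, add_assoc]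
    rw [sum_congr rfl htel, sum_range_sub' (fun i => a (N + i)), add_zero, sub_le_self_iff]
    positivity
  have hsum : Summable fun i => α * |genBinom α (i + N)| :=
    summable_of_sum_range_le (fun i => by positivity) hpartial
  have htail : Summable fun i => |genBinom α (i + N)| := (summable_mul_left_iff hα.ne').1 hsum
  have habs : Summable fun i => |genBinom α i| := (summable_nat_add_iff N).1 htail
  exact habs.of_abs

theorem hasSum_genBinom {α : ℝ} (hα : 0 < α) : HasSum (genBinom α) (2 ^ α) := by
  have hs := (summable_genBinom hα).hasSum
  have habel := Real.tendsto_tsum_powerSeries_nhdsWithin_lt hs.tendsto_sum_nat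
  have hnear : (fun x => ∑' n, genBinom α n * x ^ n) =ᶠ[𝓝[<] 1] fun x => (1 + x) ^ α := by
    filter_upwards [Ioo_mem_nhdsLT (show (-1 : ℝ) < 1 by norm_num)] with x hx
    exact (hasSum_genBinom_mul_pow α (abs_lt.2 hx)).tsum_eq
  have hcont : Tendsto (fun x : ℝ => (1 + x) ^ α) (𝓝[<] 1) (𝓝 ((1 + 1) ^ α)) :=
    ((continuousAt_const.add continuousAt_id).rpow_const (Or.inl (by norm_num))).tendsto.mono_left
      nhdsWithin_le_nhds
  rwa [tendsto_nhds_unique (habel.congr' hnear) hcont, one_add_one_eq_two] at hs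

theorem stmt_5_general (μ : ℝ) (hμ0 : 0 < μ) :
    HasSum (fun n : ℕ => genBinom μ n / (2 : ℝ) ^ μ) 1 := by
  simpa [div_self (Real.rpow_pos_of_pos two_pos μ).ne'] using
    (hasSum_genBinom hμ0).div_const (2 ^ μ)

theorem stmt_5 (μ : ℝ) (hμ0 : 0 < μ) (hμ1 : μ < 1) :
    HasSum (fun n : ℕ => genBinom μ n / (2 : ℝ) ^ μ) 1 :=
  stmt_5_general μ hμ0
end

section
/- For 0 < α < 1 and every n ≥ 1, C(α, 2n) - (-1)^n C(α, n) = |C(α, n)| - |C(α, 2n)| > 0. -/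
lemma genBinom_succ (α : ℝ) (k : ℕ) :
    genBinom α (k + 1) = genBinom α k * ((α - k) / (k + 1)) := by
  have h1 : ((k:ℝ) + 1) ≠ 0 := by positivity
  have h2 : ((k.factorial : ℝ)) ≠ 0 := by positivity
  simp only [genBinom, Finset.prod_range_succ, Nat.factorial_succ, Nat.cast_mul,
    Nat.cast_add, Nat.cast_one]
  rw [div_mul_div_comm]
  congr 1 <;> ring

lemma genBinom_sign (α : ℝ) (hα0 : 0 < α) (hα1 : α < 1) :
    ∀ n, 1 ≤ n → 0 < (-1 : ℝ) ^ (n - 1) * genBinom α n := by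
  intro n hn
  induction n with
  | zero => omega
  | succ k ih =>
    rcases Nat.eq_or_lt_of_le hn with h | h
    · have : k = 0 := by omega
      subst this
      simp [genBinom]
      linarith
    · have hk : 1 ≤ k := by omega
      have ihk := ih hk
      have hpos : 0 < ((k : ℝ) - α) / (k + 1) := by
        apply div_pos
        · have : (1:ℝ) ≤ k := by exact_mod_cast hk
          linarith
        · positivity
      have heq : (-1:ℝ) ^ (k + 1 - 1) * genBinom α (k + 1)
          = ((-1:ℝ) ^ (k - 1) * genBinom α k) * (((k:ℝ) - α) / (k + 1)) := by
        rw [genBinom_succ, show k + 1 - 1 = (k - 1) + 1 from by omega, pow_succ]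
        field_simp
        ring
      rw [heq]
      exact mul_pos ihk hpos

lemma genBinom_abs_lt (α : ℝ) (hα0 : 0 < α) (hα1 : α < 1) (k : ℕ) (hk : 1 ≤ k) :
    |genBinom α (k + 1)| < |genBinom α k| := by
  have h1 : (1:ℝ) ≤ k := by exact_mod_cast hk
  have habs : 0 < |genBinom α k| := by
    have hs := genBinom_sign α hα0 hα1 k hk
    exact abs_pos.mpr (fun h => by simp [h] at hs)
  rw [genBinom_succ, abs_mul]
  have hr : |((α - k) / (k + 1))| = ((k:ℝ) - α) / (k + 1) := by
    rw [abs_div, abs_of_pos (by positivity : (0:ℝ) < (k:ℝ)+1),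
      abs_of_neg (by linarith : α - (k:ℝ) < 0)]
    ring_nf
  rw [hr]
  have hlt : ((k:ℝ) - α) / (k + 1) < 1 := by
    rw [div_lt_one (by positivity)]
    linarith
  calc |genBinom α k| * (((k:ℝ) - α) / (k + 1)) < |genBinom α k| * 1 :=
        mul_lt_mul_of_pos_left hlt habs
    _ = |genBinom α k| := mul_one _

lemma genBinom_abs_lt' (α : ℝ) (hα0 : 0 < α) (hα1 : α < 1) (k : ℕ) (hk : 1 ≤ k) :
    ∀ j, |genBinom α (k + j + 1)| < |genBinom α k| := by
  intro j
  induction j with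
  | zero => simpa using genBinom_abs_lt α hα0 hα1 k hk
  | succ m ih =>
    have h := genBinom_abs_lt α hα0 hα1 (k + m + 1) (by omega)
    calc |genBinom α (k + (m+1) + 1)| = |genBinom α ((k + m + 1) + 1)| := by ring_nf
      _ < |genBinom α (k + m + 1)| := h
      _ < |genBinom α k| := ih

theorem stmt_10 (α : ℝ) (hα0 : 0 < α) (hα1 : α < 1) (n : ℕ) (hn : 1 ≤ n) :
    genBinom α (2 * n) - (-1 : ℝ) ^ n * genBinom α n
      = |genBinom α n| - |genBinom α (2 * n)| ∧
    0 < genBinom α (2 * n) - (-1 : ℝ) ^ n * genBinom α n := by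
  have hs1 := genBinom_sign α hα0 hα1 n hn
  have hs2 := genBinom_sign α hα0 hα1 (2 * n) (by omega)
  have e1 : |genBinom α n| = (-1:ℝ)^(n-1) * genBinom α n := by
    rw [← abs_of_pos hs1, abs_mul, abs_pow, abs_neg, abs_one, one_pow, one_mul]
  have e2 : |genBinom α (2*n)| = (-1:ℝ)^(2*n-1) * genBinom α (2*n) := by
    rw [← abs_of_pos hs2, abs_mul, abs_pow, abs_neg, abs_one, one_pow, one_mul]
  have hodd : (-1:ℝ)^(2*n-1) = -1 := Odd.neg_one_pow ⟨n-1, by omega⟩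
  have key : genBinom α (2 * n) - (-1 : ℝ) ^ n * genBinom α n
      = |genBinom α n| - |genBinom α (2 * n)| := by
    have hp := pow_succ (-1:ℝ) (n-1)
    rw [show n - 1 + 1 = n from by omega] at hp
    rw [e1, e2, hodd, hp]
    ring
  refine ⟨key, ?_⟩
  rw [key]
  have := genBinom_abs_lt' α hα0 hα1 n hn (n - 1)
  rw [show n + (n-1) + 1 = 2*n from by omega] at this
  linarith
end
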